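/- If λ ≠ β and λ ≠ 1−β, then the non-unital associative subalgebra of the 4×4 real matrices generated by {l_o, l_a, l_b} equals M₃, the subspace of matrices whose only possibly nonzero entries are at positions (1,1), (2,1), (2,2), (2,3), (3,1), (3,2), (3,3), (4,1), (4,2), (4,3). -/
import Mathlib


/-- The matrix of left multiplication by `o` in `B'(l, β)` in the ordered basis
`(o, a, b, ab)`: `l_o = E₁₁ + l·E₂₂ + l·E₃₃`. -/
noncomputable def lMo (l β : ℝ) : Matrix (Fin 4) (Fin 4) ℝ :=
  !![1, 0, 0, 0;
     0, l, 0, 0;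
     0, 0, l, 0;
     0, 0, 0, 0]

/-- The matrix of left multiplication by `a` in `B'(l, β)`:
`l_a = l·E₂₁ + E₂₂ + ((l-β)/l)·E₂₃ + ((l+β-1)/l)·E₃₃ + E₄₃`. -/
noncomputable def lMa (l β : ℝ) : Matrix (Fin 4) (Fin 4) ℝ :=
  !![0, 0, 0, 0;
     l, 1, (l - β) / l, 0;
     0, 0, (l + β - 1) / l, 0;
     0, 0, 1, 0]

/-- The matrix of left multiplication by `b` in `B'(l, β)`:
`l_b = ((l-β)/l)·E₂₂ + l·E₃₁ + ((l+β-1)/l)·E₃₂ + E₃₃ + E₄₂`. -/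
noncomputable def lMb (l β : ℝ) : Matrix (Fin 4) (Fin 4) ℝ :=
  !![0, 0, 0, 0;
     0, (l - β) / l, 0, 0;
     l, (l + β - 1) / l, 1, 0;
     0, 1, 0, 0]

/-- `M₃`: the 4×4 real matrices whose only possibly nonzero entries are at the (1-indexed)
positions (1,1), (2,1), (2,2), (2,3), (3,1), (3,2), (3,3), (4,1), (4,2), (4,3). -/
def Mset3 : Set (Matrix (Fin 4) (Fin 4) ℝ) :=
  {m | m 0 1 = 0 ∧ m 0 2 = 0 ∧ m 0 3 = 0 ∧ m 1 3 = 0 ∧ m 2 3 = 0 ∧ m 3 3 = 0}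

def E00 : Matrix (Fin 4) (Fin 4) ℝ := !![1,0,0,0;0,0,0,0;0,0,0,0;0,0,0,0]
def E10 : Matrix (Fin 4) (Fin 4) ℝ := !![0,0,0,0;1,0,0,0;0,0,0,0;0,0,0,0]
def E11 : Matrix (Fin 4) (Fin 4) ℝ := !![0,0,0,0;0,1,0,0;0,0,0,0;0,0,0,0]
def E12 : Matrix (Fin 4) (Fin 4) ℝ := !![0,0,0,0;0,0,1,0;0,0,0,0;0,0,0,0]
def E20 : Matrix (Fin 4) (Fin 4) ℝ := !![0,0,0,0;0,0,0,0;1,0,0,0;0,0,0,0]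
def E21 : Matrix (Fin 4) (Fin 4) ℝ := !![0,0,0,0;0,0,0,0;0,1,0,0;0,0,0,0]
def E22 : Matrix (Fin 4) (Fin 4) ℝ := !![0,0,0,0;0,0,0,0;0,0,1,0;0,0,0,0]
def E30 : Matrix (Fin 4) (Fin 4) ℝ := !![0,0,0,0;0,0,0,0;0,0,0,0;1,0,0,0]
def E31 : Matrix (Fin 4) (Fin 4) ℝ := !![0,0,0,0;0,0,0,0;0,0,0,0;0,1,0,0]
def E32 : Matrix (Fin 4) (Fin 4) ℝ := !![0,0,0,0;0,0,0,0;0,0,0,0;0,0,1,0]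

def mD : Matrix (Fin 4) (Fin 4) ℝ := !![0,0,0,0;0,1,0,0;0,0,1,0;0,0,0,0]
noncomputable def mA (l β : ℝ) : Matrix (Fin 4) (Fin 4) ℝ :=
  !![0,0,0,0; 0,1,(l-β)/l,0; 0,0,(l+β-1)/l,0; 0,0,0,0]
noncomputable def mB (l β : ℝ) : Matrix (Fin 4) (Fin 4) ℝ :=
  !![0,0,0,0; 0,(l-β)/l,0,0; 0,(l+β-1)/l,1,0; 0,0,0,0]
noncomputable def mX (l β : ℝ) : Matrix (Fin 4) (Fin 4) ℝ :=
  !![0,0,0,0; 0,0,-(((l-β)/l)*((l+β-1)/l)),0; 0,0,((l+β-1)/l)*((1-β)/l),0; 0,0,0,0]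
noncomputable def mY (l β : ℝ) : Matrix (Fin 4) (Fin 4) ℝ :=
  !![0,0,0,0; 0,((l-β)/l)*(β/l),0,0; 0,-(((l-β)/l)*((l+β-1)/l)),0,0; 0,0,0,0]

def S3 : NonUnitalSubalgebra ℝ (Matrix (Fin 4) (Fin 4) ℝ) where
  carrier := {m | m 0 1 = 0 ∧ m 0 2 = 0 ∧ m 0 3 = 0 ∧ m 1 3 = 0 ∧ m 2 3 = 0 ∧ m 3 3 = 0}
  add_mem' := by
    rintro A B ⟨a1,a2,a3,a4,a5,a6⟩ ⟨b1,b2,b3,b4,b5,b6⟩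
    refine ⟨?_,?_,?_,?_,?_,?_⟩ <;> simp [Matrix.add_apply, *]
  zero_mem' := by refine ⟨?_,?_,?_,?_,?_,?_⟩ <;> simp
  smul_mem' := by
    rintro r A ⟨a1,a2,a3,a4,a5,a6⟩
    refine ⟨?_,?_,?_,?_,?_,?_⟩ <;> simp [Matrix.smul_apply, *]
  mul_mem' := by
    rintro A B ⟨a1,a2,a3,a4,a5,a6⟩ ⟨b1,b2,b3,b4,b5,b6⟩
    refine ⟨?_,?_,?_,?_,?_,?_⟩ <;> simp [Matrix.mul_apply, Fin.sum_univ_four, *]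

set_option maxHeartbeats 4000000

/-- If `l ≠ β` and `l ≠ 1 - β`, the non-unital associative subalgebra of the 4×4 real
matrices generated by `{l_o, l_a, l_b}` equals `M₃`. -/
theorem stmt_18 (l β : ℝ) (hl0 : 0 < l) (hl1 : l < 1) (hβ0 : 0 < β) (hβ1 : β < 1)
    (h1 : l ≠ β) (h2 : l ≠ 1 - β) :
    (NonUnitalAlgebra.adjoin ℝ
        ({lMo l β, lMa l β, lMb l β} : Set (Matrix (Fin 4) (Fin 4) ℝ)) :
      Set (Matrix (Fin 4) (Fin 4) ℝ)) = Mset3 := by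
  have hl : l ≠ 0 := ne_of_gt hl0
  have h1l : (1:ℝ) - l ≠ 0 := by intro h; apply absurd hl1; linarith
  have hll : l - l*l ≠ 0 := fun h => (mul_ne_zero hl h1l) (by nlinarith)
  have hc : l - β ≠ 0 := sub_ne_zero.mpr h1
  have hd : l + β - 1 ≠ 0 := by intro h; apply h2; linarith
  have hb0 : β ≠ 0 := ne_of_gt hβ0
  have hb1 : (1:ℝ) - β ≠ 0 := by intro h; apply absurd hβ1; linarith
  have eD : mD = (l - l*l)⁻¹ • (lMo l β - lMo l β * lMo l β) := by
    ext i j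
    fin_cases i <;> fin_cases j <;>
      simp [lMo, lMa, lMb, mD, mA, mB, mX, mY, E00, E10, E11, E12, E20, E21, E22, E30, E31, E32, Matrix.mul_apply, Fin.sum_univ_four, Matrix.vecHead, Matrix.vecTail]
    all_goals (try field_simp)
    all_goals (try ring)
    all_goals tauto
  have e00 : E00 = lMo l β - l • mD := by
    ext i j
    fin_cases i <;> fin_cases j <;>
      simp [lMo, lMa, lMb, mD, mA, mB, mX, mY, E00, E10, E11, E12, E20, E21, E22, E30, E31, E32, Matrix.mul_apply, Fin.sum_univ_four, Matrix.vecHead, Matrix.vecTail]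
    all_goals (try field_simp)
    all_goals (try ring)
    all_goals tauto
  have e10 : E10 = l⁻¹ • (lMa l β * E00) := by
    ext i j
    fin_cases i <;> fin_cases j <;>
      simp [lMo, lMa, lMb, mD, mA, mB, mX, mY, E00, E10, E11, E12, E20, E21, E22, E30, E31, E32, Matrix.mul_apply, Fin.sum_univ_four, Matrix.vecHead, Matrix.vecTail]
    all_goals (try field_simp)
    all_goals (try ring)
    all_goals tauto
  have e20 : E20 = l⁻¹ • (lMb l β * E00) := by
    ext i j
    fin_cases i <;> fin_cases j <;>
      simp [lMo, lMa, lMb, mD, mA, mB, mX, mY, E00, E10, E11, E12, E20, E21, E22, E30, E31, E32, Matrix.mul_apply, Fin.sum_univ_four, Matrix.vecHead, Matrix.vecTail]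
    all_goals (try field_simp)
    all_goals (try ring)
    all_goals tauto
  have e32 : E32 = lMa l β * mD - mD * lMa l β + l • E10 := by
    ext i j
    fin_cases i <;> fin_cases j <;>
      simp [lMo, lMa, lMb, mD, mA, mB, mX, mY, E00, E10, E11, E12, E20, E21, E22, E30, E31, E32, Matrix.mul_apply, Fin.sum_univ_four, Matrix.vecHead, Matrix.vecTail]
    all_goals (try field_simp)
    all_goals (try ring)
    all_goals tauto
  have e31 : E31 = lMb l β * mD - mD * lMb l β + l • E20 := by
    ext i j
    fin_cases i <;> fin_cases j <;>
      simp [lMo, lMa, lMb, mD, mA, mB, mX, mY, E00, E10, E11, E12, E20, E21, E22, E30, E31, E32, Matrix.mul_apply, Fin.sum_univ_four, Matrix.vecHead, Matrix.vecTail]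
    all_goals (try field_simp)
    all_goals (try ring)
    all_goals tauto
  have eA : mA l β = lMa l β - l • E10 - E32 := by
    ext i j
    fin_cases i <;> fin_cases j <;>
      simp [lMo, lMa, lMb, mD, mA, mB, mX, mY, E00, E10, E11, E12, E20, E21, E22, E30, E31, E32, Matrix.mul_apply, Fin.sum_univ_four, Matrix.vecHead, Matrix.vecTail]
    all_goals (try field_simp)
    all_goals (try ring)
    all_goals tauto
  have eB : mB l β = lMb l β - l • E20 - E31 := by
    ext i j
    fin_cases i <;> fin_cases j <;>
      simp [lMo, lMa, lMb, mD, mA, mB, mX, mY, E00, E10, E11, E12, E20, E21, E22, E30, E31, E32, Matrix.mul_apply, Fin.sum_univ_four, Matrix.vecHead, Matrix.vecTail]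
    all_goals (try field_simp)
    all_goals (try ring)
    all_goals tauto
  have eX : mX l β = mA l β - mA l β * mA l β := by
    ext i j
    fin_cases i <;> fin_cases j <;>
      simp [lMo, lMa, lMb, mD, mA, mB, mX, mY, E00, E10, E11, E12, E20, E21, E22, E30, E31, E32, Matrix.mul_apply, Fin.sum_univ_four, Matrix.vecHead, Matrix.vecTail]
    all_goals (try field_simp)
    all_goals (try ring)
    all_goals tauto
  have eY : mY l β = mB l β - mB l β * mB l β := by
    ext i j
    fin_cases i <;> fin_cases j <;>
      simp [lMo, lMa, lMb, mD, mA, mB, mX, mY, E00, E10, E11, E12, E20, E21, E22, E30, E31, E32, Matrix.mul_apply, Fin.sum_univ_four, Matrix.vecHead, Matrix.vecTail]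
    all_goals (try field_simp)
    all_goals (try ring)
    all_goals tauto
  have e12 : E12 = (((l-β)/l)^2*((l+β-1)/l)^2*((1-l)/l))⁻¹ • ((((l-β)/l)^2*((l+β-1)/l)^2) • mX l β - (((l+β-1)/l)*((1-β)/l)) • (mY l β * mX l β)) := by
    ext i j
    fin_cases i <;> fin_cases j <;>
      simp [lMo, lMa, lMb, mD, mA, mB, mX, mY, E00, E10, E11, E12, E20, E21, E22, E30, E31, E32, Matrix.mul_apply, Fin.sum_univ_four, Matrix.vecHead, Matrix.vecTail]
    all_goals (try field_simp)
    all_goals (try ring)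
    all_goals tauto
  have e22 : E22 = (((l-β)/l)^2*((l+β-1)/l)^2*((1-l)/l))⁻¹ • ((((l-β)/l)^2*((l+β-1)/l)*(β/l)) • mX l β - (((l-β)/l)*((l+β-1)/l)) • (mY l β * mX l β)) := by
    ext i j
    fin_cases i <;> fin_cases j <;>
      simp [lMo, lMa, lMb, mD, mA, mB, mX, mY, E00, E10, E11, E12, E20, E21, E22, E30, E31, E32, Matrix.mul_apply, Fin.sum_univ_four, Matrix.vecHead, Matrix.vecTail]
    all_goals (try field_simp)
    all_goals (try ring)
    all_goals tauto
  have e11 : E11 = (((l-β)/l)^2*((l+β-1)/l)^2*((1-l)/l))⁻¹ • ((((l-β)/l)*((l+β-1)/l)^2*((1-β)/l)) • mY l β - (((l-β)/l)*((l+β-1)/l)) • (mX l β * mY l β)) := by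
    ext i j
    fin_cases i <;> fin_cases j <;>
      simp [lMo, lMa, lMb, mD, mA, mB, mX, mY, E00, E10, E11, E12, E20, E21, E22, E30, E31, E32, Matrix.mul_apply, Fin.sum_univ_four, Matrix.vecHead, Matrix.vecTail]
    all_goals (try field_simp)
    all_goals (try ring)
    all_goals tauto
  have e21 : E21 = (((l-β)/l)^2*((l+β-1)/l)^2*((1-l)/l))⁻¹ • ((((l-β)/l)^2*((l+β-1)/l)^2) • mY l β - (((l-β)/l)*(β/l)) • (mX l β * mY l β)) := by
    ext i j
    fin_cases i <;> fin_cases j <;>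
      simp [lMo, lMa, lMb, mD, mA, mB, mX, mY, E00, E10, E11, E12, E20, E21, E22, E30, E31, E32, Matrix.mul_apply, Fin.sum_univ_four, Matrix.vecHead, Matrix.vecTail]
    all_goals (try field_simp)
    all_goals (try ring)
    all_goals tauto
  have e30 : E30 = E32 * E20 := by
    ext i j
    fin_cases i <;> fin_cases j <;>
      simp [lMo, lMa, lMb, mD, mA, mB, mX, mY, E00, E10, E11, E12, E20, E21, E22, E30, E31, E32, Matrix.mul_apply, Fin.sum_univ_four, Matrix.vecHead, Matrix.vecTail]
    all_goals (try field_simp)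
    all_goals (try ring)
    all_goals tauto
  set T := NonUnitalAlgebra.adjoin ℝ ({lMo l β, lMa l β, lMb l β} : Set (Matrix (Fin 4) (Fin 4) ℝ)) with hT
  have ho : lMo l β ∈ T := NonUnitalAlgebra.subset_adjoin ℝ (by simp)
  have ha : lMa l β ∈ T := NonUnitalAlgebra.subset_adjoin ℝ (by simp)
  have hbm : lMb l β ∈ T := NonUnitalAlgebra.subset_adjoin ℝ (by simp)
  have hD : mD ∈ T := by rw [eD]; exact SMulMemClass.smul_mem _ (sub_mem ho (mul_mem ho ho))
  have h00 : E00 ∈ T := by rw [e00]; exact sub_mem ho (SMulMemClass.smul_mem _ hD)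
  have h10 : E10 ∈ T := by rw [e10]; exact SMulMemClass.smul_mem _ (mul_mem ha h00)
  have h20 : E20 ∈ T := by rw [e20]; exact SMulMemClass.smul_mem _ (mul_mem hbm h00)
  have h32 : E32 ∈ T := by
    rw [e32]; exact add_mem (sub_mem (mul_mem ha hD) (mul_mem hD ha)) (SMulMemClass.smul_mem _ h10)
  have h31 : E31 ∈ T := by
    rw [e31]; exact add_mem (sub_mem (mul_mem hbm hD) (mul_mem hD hbm)) (SMulMemClass.smul_mem _ h20)
  have hA : mA l β ∈ T := by
    rw [eA]; exact sub_mem (sub_mem ha (SMulMemClass.smul_mem _ h10)) h32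
  have hB : mB l β ∈ T := by
    rw [eB]; exact sub_mem (sub_mem hbm (SMulMemClass.smul_mem _ h20)) h31
  have hX : mX l β ∈ T := by rw [eX]; exact sub_mem hA (mul_mem hA hA)
  have hY : mY l β ∈ T := by rw [eY]; exact sub_mem hB (mul_mem hB hB)
  have h12 : E12 ∈ T := by
    rw [e12]
    exact SMulMemClass.smul_mem _ (sub_mem (SMulMemClass.smul_mem _ hX)
      (SMulMemClass.smul_mem _ (mul_mem hY hX)))
  have h22 : E22 ∈ T := by
    rw [e22]
    exact SMulMemClass.smul_mem _ (sub_mem (SMulMemClass.smul_mem _ hX)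
      (SMulMemClass.smul_mem _ (mul_mem hY hX)))
  have h11 : E11 ∈ T := by
    rw [e11]
    exact SMulMemClass.smul_mem _ (sub_mem (SMulMemClass.smul_mem _ hY)
      (SMulMemClass.smul_mem _ (mul_mem hX hY)))
  have h21 : E21 ∈ T := by
    rw [e21]
    exact SMulMemClass.smul_mem _ (sub_mem (SMulMemClass.smul_mem _ hY)
      (SMulMemClass.smul_mem _ (mul_mem hX hY)))
  have h30 : E30 ∈ T := by rw [e30]; exact mul_mem h32 h20
  apply Set.eq_of_subset_of_subset
  · intro m hm
    have hsub : T ≤ S3 := by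
      rw [hT]
      apply NonUnitalAlgebra.adjoin_le
      rintro x (rfl | rfl | rfl) <;>
        refine ⟨?_,?_,?_,?_,?_,?_⟩ <;>
          simp [lMo, lMa, lMb, Matrix.vecHead, Matrix.vecTail]
    exact hsub hm
  · rintro m ⟨z1,z2,z3,z4,z5,z6⟩
    have hdec : m = m 0 0 • E00 + m 1 0 • E10 + m 1 1 • E11 + m 1 2 • E12
        + m 2 0 • E20 + m 2 1 • E21 + m 2 2 • E22
        + m 3 0 • E30 + m 3 1 • E31 + m 3 2 • E32 := by
      ext i j
      fin_cases i <;> fin_cases j <;>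
        simp [E00, E10, E11, E12, E20, E21, E22, E30, E31, E32,
          Matrix.vecHead, Matrix.vecTail, z1, z2, z3, z4, z5, z6]
    rw [hdec]
    exact add_mem (add_mem (add_mem (add_mem (add_mem (add_mem (add_mem (add_mem (add_mem
      (SMulMemClass.smul_mem _ h00) (SMulMemClass.smul_mem _ h10))
      (SMulMemClass.smul_mem _ h11)) (SMulMemClass.smul_mem _ h12))
      (SMulMemClass.smul_mem _ h20)) (SMulMemClass.smul_mem _ h21))
      (SMulMemClass.smul_mem _ h22)) (SMulMemClass.smul_mem _ h30))
      (SMulMemClass.smul_mem _ h31)) (SMulMemClass.smul_mem _ h32)
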